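/- If increments within each individual's concavized chain have strictly decreasing efficiencies, then processing all increments globally in non-increasing efficiency order guarantees that at every point, the set of increments taken from each individual's chain is a prefix of that chain. -/

import Mathlib

/-!
An increment of individual `i` with a larger index has strictly smaller efficiency, so in a list
sorted by non-increasing efficiency it cannot be taken before any earlier increment of the same
chain. Hence the indices of `i` in every prefix of the list are downward closed in `[2, m i]`,
and a downward closed subset of a bounded interval of `ℕ` is an initial segment.
-/

theorem List.Pairwise.mem_take_of_lt {α β : Type*} [LinearOrder β] {f : α → β} {L : List α}
    (hL : L.Pairwise fun p q => f q ≤ f p) {t : ℕ} {x y : α}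
    (hx : x ∈ L.take t) (hy : y ∈ L) (hxy : f x < f y) : y ∈ L.take t := by
  by_contra hyt
  rw [← L.take_append_drop t] at hL hy
  have hyd : y ∈ L.drop t := (List.mem_append.1 hy).resolve_left hyt
  exact (List.pairwise_append.1 hL).2.2 x hx y hyd |>.not_gt hxy

theorem Nat.exists_forall_iff_le_and_le {P : ℕ → Prop} {a b : ℕ} (ha : 0 < a)
    (hP : ∀ j, P j → a ≤ j ∧ j ≤ b) (hdown : ∀ j j', a ≤ j → j < j' → P j' → P j) :
    ∃ k, ∀ j, P j ↔ a ≤ j ∧ j ≤ k := by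
  classical
  refine ⟨Nat.findGreatest P b, fun j =>
    ⟨fun hj => ⟨(hP j hj).1, Nat.le_findGreatest (hP j hj).2 hj⟩, ?_⟩⟩
  rintro ⟨haj, hjk⟩
  have hk : P (Nat.findGreatest P b) := Nat.findGreatest_of_ne_zero rfl (by omega)
  rcases hjk.eq_or_lt with rfl | hlt
  · exact hk
  · exact hdown j _ haj hlt hk

theorem stmt13_general {n : ℕ} (m : Fin n → ℕ) (e : Fin n → ℕ → ℝ)
    (hdec : ∀ i : Fin n, ∀ j j' : ℕ, 2 ≤ j → j < j' → j' ≤ m i → e i j' < e i j)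
    (L : List (Fin n × ℕ))
    (hmem : ∀ p : Fin n × ℕ, p ∈ L ↔ 2 ≤ p.2 ∧ p.2 ≤ m p.1)
    (hsorted : L.Pairwise (fun p q => e q.1 q.2 ≤ e p.1 p.2)) :
    ∀ t : ℕ, ∀ i : Fin n, ∃ k : ℕ,
      ∀ j : ℕ, (i, j) ∈ L.take t ↔ 2 ≤ j ∧ j ≤ k := by
  intro t i
  have hbounds : ∀ j, (i, j) ∈ L.take t → 2 ≤ j ∧ j ≤ m i := fun j hj =>
    (hmem (i, j)).1 (List.mem_of_mem_take hj)
  refine Nat.exists_forall_iff_le_and_le two_pos hbounds fun j j' hj hjj' hj' => ?_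
  have hjL : (i, j) ∈ L := (hmem (i, j)).2 ⟨hj, hjj'.le.trans (hbounds j' hj').2⟩
  exact hsorted.mem_take_of_lt (f := fun p => e p.1 p.2) hj' hjL
    (hdec i j j' hj hjj' (hbounds j' hj').2)

/-- If efficiencies are strictly decreasing within each individual's chain, then
any prefix of the globally (non-increasingly) sorted merged list contains, for
each individual, exactly a prefix `{2, …, k}` of her chain. -/
theorem stmt13 {n : ℕ} (m : Fin n → ℕ) (e : Fin n → ℕ → ℝ)
    (hdec : ∀ i : Fin n, ∀ j j' : ℕ, 2 ≤ j → j < j' → j' ≤ m i → e i j' < e i j)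
    (L : List (Fin n × ℕ)) (hnd : L.Nodup)
    (hmem : ∀ p : Fin n × ℕ, p ∈ L ↔ 2 ≤ p.2 ∧ p.2 ≤ m p.1)
    (hsorted : L.Pairwise (fun p q => e q.1 q.2 ≤ e p.1 p.2)) :
    ∀ t : ℕ, ∀ i : Fin n, ∃ k : ℕ,
      ∀ j : ℕ, (i, j) ∈ L.take t ↔ 2 ≤ j ∧ j ≤ k :=
  stmt13_general m e hdec L hmem hsorted
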